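/- For N ≥ 2 qubits indexed by {0, 1, …, N−1}, let U = |0⟩⟨0|_0 ⊗ 1 + |1⟩⟨1|_0 ⊗ ∏_{n≠0} X_n be the generalized CNOT on (ℂ²)^{⊗N} controlled on site 0 and targeting all other sites. Then U is a self-inverse unitary and U* X_0 U = ∏_{n=0}^{N−1} X_n, the product of Pauli X over every site. In particular, for site indices taken modulo N with N ≥ 5, U maps the operator X_0 localized on site 0 to an operator acting nontrivially on every site, so U is not nearest-neighbour locality preserving (not a nearest-neighbour QCA), even though it is a matrix product (tensor network) unitary of bond dimension 2. -/

import Mathlib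

open scoped Kronecker

namespace QCA

variable {ι : Type} [Fintype ι] [DecidableEq ι]
variable (F : ι → Type) [∀ i, Fintype (F i)] [∀ i, DecidableEq (F i)]

/-- Configurations: the product basis labels of the lattice Hilbert space `⨂ i, ℂ^(F i)`. -/
abbrev Conf : Type := ∀ i, F i

/-- Operators on the lattice Hilbert space, as matrices in the product basis. -/
abbrev Ops : Type := Matrix (Conf F) (Conf F) ℂ

/-- `A` is localized on the region `R` if it has the form `B ⊗ 1` with respect to the
splitting `R | Rᶜ` of the tensor factors (entrywise characterization). -/
def Localized (A : Ops F) (R : Set ι) : Prop :=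
  (∀ x y : Conf F, A x y ≠ 0 → ∀ i ∉ R, x i = y i) ∧
  (∀ x y x' y' : Conf F, (∀ i ∈ R, x i = x' i) → (∀ i ∈ R, y i = y' i) →
      (∀ i ∉ R, x i = y i) → (∀ i ∉ R, x' i = y' i) → A x y = A x' y')

/-- Heisenberg evolution `A ↦ U* A U`. -/
noncomputable def heis (U A : Ops F) : Ops F := star U * A * U

/-- The support algebra `S(𝒮, R)`: the smallest subalgebra of operators localized on `R`
such that `𝒮` is contained in (the algebra generated by) it together with the full algebra
of operators localized on `Rᶜ`. -/
noncomputable def supportAlgebra (S : Set (Ops F)) (R : Set ι) : Subalgebra ℂ (Ops F) :=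
  sInf {C : Subalgebra ℂ (Ops F) |
    (C : Set (Ops F)) ⊆ {A | Localized F A R} ∧
    S ⊆ ↑(Algebra.adjoin ℂ ((C : Set (Ops F)) ∪ {A | Localized F A Rᶜ}))}

section Ring

variable {M : ℕ} (sector : ZMod M → Finset ι)

/-- `U` is a nearest-neighbour QCA for the ring of `M` (super)cells described by `sector`:
`U` is unitary, and conjugation by `U` maps operators localized on cell `k` to operators
localized on cells `{k-1, k, k+1}`. -/
def IsRingQCA (U : Ops F) : Prop :=
  U ∈ Matrix.unitaryGroup (Conf F) ℂ ∧
  ∀ (k : ZMod M) (A : Ops F), Localized F A ↑(sector k) →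
    Localized F (heis F U A) (↑(sector (k - 1)) ∪ ↑(sector k) ∪ ↑(sector (k + 1)))

/-- The even support algebra `R_k = S(u(A_k ⊗ A_{k+1}), A_{k-1} ⊗ A_k)` (`k` an even site). -/
noncomputable def REven (U : Ops F) (k : ZMod M) : Subalgebra ℂ (Ops F) :=
  supportAlgebra F (heis F U '' {A | Localized F A (↑(sector k) ∪ ↑(sector (k + 1)))})
    (↑(sector (k - 1)) ∪ ↑(sector k))

/-- The odd support algebra `R_{k+1} = S(u(A_k ⊗ A_{k+1}), A_{k+1} ⊗ A_{k+2})` (`k` even). -/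
noncomputable def ROdd (U : Ops F) (k : ZMod M) : Subalgebra ℂ (Ops F) :=
  supportAlgebra F (heis F U '' {A | Localized F A (↑(sector k) ∪ ↑(sector (k + 1)))})
    (↑(sector (k + 1)) ∪ ↑(sector (k + 2)))

/-- The Hilbert space dimension of the (super)cell `k`. -/
def siteDim (k : ZMod M) : ℕ := ∏ i ∈ sector k, Fintype.card (F i)

/-- `r` with `C ≅ M_r(ℂ)`, recovered as the square root of the linear dimension of `C`. -/
noncomputable def rdim (C : Subalgebra ℂ (Ops F)) : ℕ := Nat.sqrt (Module.finrank ℂ C)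

/-- The GNVW index `ind[U] = r_{2n} / d_{2n}`, evaluated at the even site `2n = 0`. -/
noncomputable def ringIndex (U : Ops F) : ℚ :=
  (rdim F (REven F sector U 0) : ℚ) / (siteDim F sector 0 : ℚ)

end Ring

/-- The standard ring structure: one site per cell. -/
def stdSector (N : ℕ) : ZMod N → Finset (ZMod N) := fun n => {n}

/-- The embedding of a one-site operator at site `i` into the lattice algebra. -/
noncomputable def embedAt (i : ι) (B : Matrix (F i) (F i) ℂ) : Ops F :=
  fun x y => (if ∀ j, j ≠ i → x j = y j then 1 else 0) * B (x i) (y i)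

/-- Pairing of configurations of two parallel lattices. -/
def confPairEquiv (G : ι → Type) [∀ i, Fintype (G i)] [∀ i, DecidableEq (G i)] :
    (Conf F × Conf G) ≃ Conf (fun i => F i × G i) where
  toFun p := fun i => (p.1 i, p.2 i)
  invFun x := (fun i => (x i).1, fun i => (x i).2)
  left_inv _ := rfl
  right_inv _ := rfl

/-- The tensor product `A ⊗ B` of operators on two parallel lattices, as an operator on the
lattice whose site `i` carries the qudit `F i × G i`. -/
noncomputable def tensorOps (G : ι → Type) [∀ i, Fintype (G i)] [∀ i, DecidableEq (G i)]
    (A : Ops F) (B : Ops G) : Ops (fun i => F i × G i) :=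
  Matrix.reindex (confPairEquiv F G) (confPairEquiv F G) (A ⊗ₖ B)


/-- The Pauli matrix `X`. -/
noncomputable def pauliX : Matrix (Fin 2) (Fin 2) ℂ := !![0, 1; 1, 0]

/-- The rank-one projection `|b⟩⟨b|` on a qubit. -/
noncomputable def qproj (b : Fin 2) : Matrix (Fin 2) (Fin 2) ℂ :=
  fun i j => if i = b ∧ j = b then 1 else 0

/-- The product `∏_{n ≠ 0} Xₙ` of Pauli `X` over all sites other than `0`. -/
noncomputable def bigX (N : ℕ) [NeZero N] : Ops (fun _ : ZMod N => Fin 2) :=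
  fun x y => if x 0 = y 0 ∧ ∀ n : ZMod N, n ≠ 0 → x n = 1 - y n then 1 else 0

/-- The generalized CNOT `|0⟩⟨0|₀ ⊗ 1 + |1⟩⟨1|₀ ⊗ ∏_{n≠0} Xₙ`, controlled on qubit `0` and
targeting all other qubits. -/
noncomputable def cnotAll (N : ℕ) [NeZero N] : Ops (fun _ : ZMod N => Fin 2) :=
  embedAt (fun _ : ZMod N => Fin 2) 0 (qproj 0) +
    embedAt (fun _ : ZMod N => Fin 2) 0 (qproj 1) * bigX N

/-- The product `∏_{n} Xₙ` of Pauli `X` over every site. -/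
noncomputable def allX (N : ℕ) [NeZero N] : Ops (fun _ : ZMod N => Fin 2) :=
  fun x y => if ∀ n : ZMod N, x n = 1 - y n then 1 else 0

end QCA

/-!
`U` is the permutation matrix of the involution `T` of configurations that flips every qubit
other than `0` exactly when qubit `0` reads `1`, and `X₀`, `∏ₙ Xₙ` are the permutation matrices
of the flips of site `0` and of all sites. Conjugating a permutation matrix by `U` conjugates the
permutation by `T`, and `T ∘ flip₀ ∘ T` flips every site: the control bit changes between the
two applications of `T`, so each target is flipped exactly once. An operator with a nonzero entry
between two configurations that differ at site `n` is not localized on any region missing `n`.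
-/

open Equiv Function Matrix

theorem Fin.eq_zero_or_eq_one (a : Fin 2) : a = 0 ∨ a = 1 := by omega

theorem ZMod.apply_eq_apply_zero_of_periodic {N : ℕ} [NeZero N] {β : Type*} {α : ZMod N → β}
    (h : Periodic α 1) (n : ZMod N) : α n = α 0 := by
  simpa using h.nat_mul_eq n.val

namespace Matrix

variable {n R : Type*} [DecidableEq n]

theorem permMatrix_apply [Zero R] [One R] (σ : Perm n) (i j : n) :
    σ.permMatrix R i j = if σ i = j then 1 else 0 := by
  simp [PEquiv.toMatrix_apply]

variable [Fintype n]

theorem permMatrix_mem_unitaryGroup [CommRing R] [StarRing R] (σ : Perm n) :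
    σ.permMatrix R ∈ unitaryGroup n R := by
  rw [mem_unitaryGroup_iff', star_eq_conjTranspose, conjTranspose_permMatrix, ← permMatrix_mul,
    mul_inv_cancel, permMatrix_one]

theorem permMatrix_mul_self_of_involutive [NonAssocSemiring R] {f : n → n} (hf : Involutive f) :
    hf.toPerm.permMatrix R * hf.toPerm.permMatrix R = 1 := by
  rw [← permMatrix_mul, show hf.toPerm * hf.toPerm = 1 from Equiv.ext hf, permMatrix_one]

theorem star_permMatrix_mul_mul_permMatrix [Semiring R] [StarRing R] (σ τ : Perm n) :
    star (σ.permMatrix R) * τ.permMatrix R * σ.permMatrix R = (σ * τ * σ⁻¹).permMatrix R := by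
  rw [star_eq_conjTranspose, conjTranspose_permMatrix, permMatrix_mul, permMatrix_mul, mul_assoc]

end Matrix

namespace QCA

section Flips

variable {ι : Type*}

def flipOn (p : ι → Prop) [DecidablePred p] (x : ι → Fin 2) : ι → Fin 2 :=
  fun n => if p n then 1 - x n else x n

theorem flipOn_involutive (p : ι → Prop) [DecidablePred p] : Involutive (flipOn p) := by
  intro x
  funext n
  by_cases h : p n <;> simp [flipOn, h]

theorem flipOn_eq_iff (p : ι → Prop) [DecidablePred p] (x y : ι → Fin 2) :
    flipOn p x = y ↔ ∀ n, (p n → x n = 1 - y n) ∧ (¬ p n → x n = y n) := by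
  simp only [funext_iff, flipOn]
  refine forall_congr' fun n => ?_
  by_cases h : p n
  · simp only [h, if_true, true_implies, not_true_eq_false, false_implies, and_true]
    rw [eq_sub_iff_add_eq, sub_eq_iff_eq_add', eq_comm]
  · simp [h]

def flipPerm (p : ι → Prop) [DecidablePred p] : Perm (ι → Fin 2) :=
  (flipOn_involutive p).toPerm

variable [DecidableEq ι]

def controlledFlip (c : ι) (x : ι → Fin 2) : ι → Fin 2 :=
  if x c = 1 then flipOn (· ≠ c) x else x

theorem controlledFlip_apply_self (c : ι) (x : ι → Fin 2) : controlledFlip c x c = x c := by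
  unfold controlledFlip
  split_ifs <;> simp [flipOn]

theorem controlledFlip_apply (c : ι) (x : ι → Fin 2) (n : ι) :
    controlledFlip c x n = if x c = 1 ∧ n ≠ c then 1 - x n else x n := by
  unfold controlledFlip flipOn
  split_ifs <;> simp_all

theorem controlledFlip_involutive (c : ι) : Involutive (controlledFlip c) := by
  intro x
  conv_lhs => rw [controlledFlip, controlledFlip_apply_self]
  unfold controlledFlip
  split_ifs
  exacts [flipOn_involutive _ x, rfl]

def controlledFlipPerm (c : ι) : Perm (ι → Fin 2) :=
  (controlledFlip_involutive c).toPerm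

theorem controlledFlip_flipOn_controlledFlip (c : ι) (x : ι → Fin 2) :
    controlledFlip c (flipOn (· = c) (controlledFlip c x)) = flipOn (fun _ => True) x := by
  funext n
  obtain h | h := Fin.eq_zero_or_eq_one (x c) <;>
  by_cases hn : n = c <;> simp [controlledFlip, flipOn, h, hn]

end Flips

section Lattice

variable {ι : Type} [Fintype ι] [DecidableEq ι]
variable (F : ι → Type) [∀ i, DecidableEq (F i)]

theorem localized_embedAt (i : ι) (B : Matrix (F i) (F i) ℂ) :
    Localized F (embedAt F i B) {i} := by
  constructor
  · intro x y hxy j hj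
    by_contra hne
    exact hxy (by rw [embedAt, if_neg fun h => hne (h j hj), zero_mul])
  · intro x y x' y' hx hy hxy hxy'
    rw [embedAt, embedAt, if_pos (show ∀ j, j ≠ i → x j = y j from hxy),
      if_pos (show ∀ j, j ≠ i → x' j = y' j from hxy'), hx i rfl, hy i rfl]

theorem embedAt_diagonal (i : ι) (d : F i → ℂ) :
    embedAt F i (diagonal d) = diagonal fun x => d (x i) := by
  ext x y
  by_cases hxy : x = y
  · simp [embedAt, hxy]
  · have : ¬ ((∀ j, j ≠ i → x j = y j) ∧ x i = y i) := fun h =>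
      hxy (funext fun j => if hj : j = i then hj ▸ h.2 else h.1 j hj)
    simp only [embedAt, diagonal_apply, hxy, if_false]
    split_ifs <;> simp_all

end Lattice

theorem qproj_eq_diagonal (b : Fin 2) : qproj b = diagonal fun a => if a = b then 1 else 0 := by
  ext i j
  by_cases h : i = j <;> simp [qproj, h]
  omega

theorem embedAt_pauliX {ι : Type} [Fintype ι] [DecidableEq ι] (c : ι) :
    embedAt (fun _ : ι => Fin 2) c pauliX = (flipPerm (· = c)).permMatrix ℂ := by
  ext x y
  have hX : pauliX (x c) (y c) = if x c = 1 - y c then 1 else 0 := by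
    generalize x c = a; generalize y c = b
    fin_cases a <;> fin_cases b <;> rfl
  simp only [embedAt, hX, permMatrix_apply, flipPerm, Involutive.coe_toPerm, flipOn_eq_iff]
  rw [ite_zero_mul_ite_zero, mul_one]
  simp [forall_and, and_comm]

theorem two_not_mem_nbhd_zero {N : ℕ} (hN : 5 ≤ N) :
    (2 : ZMod N) ∉ ({0 - 1, 0, 0 + 1} : Set (ZMod N)) := by
  have hcast : ∀ k : ℕ, 0 < k → k < N → (k : ZMod N) ≠ 0 := fun k hk hkN h =>
    absurd (Nat.le_of_dvd hk ((ZMod.natCast_eq_zero_iff k N).mp h)) (by omega)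
  simp only [Set.mem_insert_iff, Set.mem_singleton_iff, zero_sub, zero_add, not_or]
  refine ⟨fun h => hcast 3 (by norm_num) (by omega) ?_,
    fun h => hcast 2 (by norm_num) (by omega) ?_, fun h => hcast 1 (by norm_num) (by omega) ?_⟩
  all_goals push_cast; linear_combination h

section QubitRing

variable (N : ℕ) [NeZero N]

theorem allX_eq_permMatrix : allX N = (flipPerm fun _ => True).permMatrix ℂ := by
  ext x y
  simp only [allX, permMatrix_apply, flipPerm, Involutive.coe_toPerm, flipOn_eq_iff]
  simp

theorem bigX_eq_permMatrix : bigX N = (flipPerm (· ≠ 0)).permMatrix ℂ := by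
  ext x y
  simp only [bigX, permMatrix_apply, flipPerm, Involutive.coe_toPerm, flipOn_eq_iff]
  simp [forall_and, and_comm]

theorem cnotAll_eq_permMatrix : cnotAll N = (controlledFlipPerm 0).permMatrix ℂ := by
  ext x y
  simp only [cnotAll, qproj_eq_diagonal, embedAt_diagonal, bigX_eq_permMatrix, Matrix.add_apply,
    diagonal_mul, diagonal_apply, permMatrix_apply, controlledFlipPerm, flipPerm,
    Involutive.coe_toPerm, controlledFlip]
  obtain h | h := Fin.eq_zero_or_eq_one (x 0)
  · simp [h, eq_comm]
  · simp [h]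
    -- the two `DecidablePred (· ≠ 0)` instances agree only after unfolding
    rfl

theorem cnotAll_mul_self : cnotAll N * cnotAll N = 1 := by
  rw [cnotAll_eq_permMatrix]
  exact permMatrix_mul_self_of_involutive (controlledFlip_involutive 0)

theorem star_cnotAll_mul_embedAt_pauliX_mul_cnotAll :
    star (cnotAll N) * embedAt (fun _ : ZMod N => Fin 2) 0 pauliX * cnotAll N = allX N := by
  rw [cnotAll_eq_permMatrix, embedAt_pauliX, allX_eq_permMatrix,
    star_permMatrix_mul_mul_permMatrix]
  congr 1
  ext1 x
  rw [Perm.inv_def, controlledFlipPerm, Involutive.toPerm_symm, Perm.mul_apply, Perm.mul_apply]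
  simp only [flipPerm, Involutive.coe_toPerm]
  exact controlledFlip_flipOn_controlledFlip 0 x

theorem allX_not_localized {R : Set (ZMod N)} {n : ZMod N} (hn : n ∉ R) :
    ¬ Localized (fun _ : ZMod N => Fin 2) (allX N) R := by
  intro h
  have hne : allX N (fun _ => 0) (fun _ => 1) ≠ 0 := by simp [allX]
  exact zero_ne_one (h.1 _ _ hne n hn)

/-- Bond dimension `2`: the bond index carries the control bit `x 0` once around the ring. -/
def cnotTensor (n : ZMod N) (a b p q : Fin 2) : ℂ :=
  if q = p ∧ (n = 0 → p = a) ∧ b = (if p = 1 ∧ n ≠ 0 then 1 - a else a) then 1 else 0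

theorem cnotAll_eq_sum_prod_cnotTensor (x y : ZMod N → Fin 2) :
    cnotAll N x y =
      ∑ α : ZMod N → Fin 2, ∏ n : ZMod N, cnotTensor N n (x n) (y n) (α n) (α (n + 1)) := by
  have hchar : ∀ α : ZMod N → Fin 2, (∀ n, α (n + 1) = α n ∧ (n = 0 → α n = x n) ∧
      y n = (if α n = 1 ∧ n ≠ 0 then 1 - x n else x n)) ↔
      α = (fun _ => x 0) ∧ controlledFlip 0 x = y := by
    intro α
    constructor
    · intro h
      obtain rfl : α = fun _ => x 0 := funext fun n => by
        rw [ZMod.apply_eq_apply_zero_of_periodic (fun m => (h m).1) n]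
        exact (h 0).2.1 rfl
      exact ⟨rfl, funext fun n => by rw [controlledFlip_apply, (h n).2.2]⟩
    · rintro ⟨rfl, rfl⟩ n
      exact ⟨rfl, fun hn => hn ▸ rfl, controlledFlip_apply 0 x n⟩
  simp only [cnotTensor, Fintype.prod_boole, hchar]
  simp only [ite_and, Finset.sum_ite_eq', Finset.mem_univ, if_true, cnotAll_eq_permMatrix,
    permMatrix_apply]
  rfl

end QubitRing

theorem generalized_cnot_not_a_qca_general (N : ℕ) [NeZero N] :
    cnotAll N * cnotAll N = 1 ∧
    cnotAll N ∈ Matrix.unitaryGroup (Conf (fun _ : ZMod N => Fin 2)) ℂ ∧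
    star (cnotAll N) * embedAt (fun _ : ZMod N => Fin 2) 0 pauliX * cnotAll N = allX N ∧
    (5 ≤ N → ∀ n : ZMod N,
      ¬ Localized (fun _ : ZMod N => Fin 2)
        (star (cnotAll N) * embedAt (fun _ : ZMod N => Fin 2) 0 pauliX * cnotAll N)
        (({n}ᶜ : Set (ZMod N)))) ∧
    (5 ≤ N → ¬ ∀ (n : ZMod N) (A : Ops (fun _ : ZMod N => Fin 2)),
      Localized (fun _ : ZMod N => Fin 2) A ({n} : Set (ZMod N)) →
      Localized (fun _ : ZMod N => Fin 2) (star (cnotAll N) * A * cnotAll N)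
        ({n - 1, n, n + 1} : Set (ZMod N))) ∧
    ∃ w : ZMod N → Fin 2 → Fin 2 → Fin 2 → Fin 2 → ℂ,
      ∀ x y : Conf (fun _ : ZMod N => Fin 2),
        cnotAll N x y = ∑ α : ZMod N → Fin 2, ∏ n : ZMod N, w n (x n) (y n) (α n) (α (n + 1)) := by
  have hX := star_cnotAll_mul_embedAt_pauliX_mul_cnotAll N
  refine ⟨cnotAll_mul_self N, ?_, hX, fun _ n => ?_, fun hN hQCA => ?_,
    ⟨cnotTensor N, cnotAll_eq_sum_prod_cnotTensor N⟩⟩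
  · rw [cnotAll_eq_permMatrix]
    exact permMatrix_mem_unitaryGroup _
  · rw [hX]
    exact allX_not_localized N (Set.notMem_compl_iff.mpr rfl)
  · have := hQCA 0 _ (localized_embedAt _ 0 pauliX)
    rw [hX] at this
    exact allX_not_localized N (two_not_mem_nbhd_zero hN) this

/-- The generalized CNOT `U` on `N ≥ 2` qubits is a self-inverse unitary
with `U* X₀ U = ∏ₙ Xₙ`.  In particular (indices mod `N`, `N ≥ 5`) it maps the operator `X₀`
localized on site `0` to an operator acting nontrivially on every site, hence is not a
nearest-neighbour QCA — even though it is a matrix-product (tensor-network) unitary of bond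
dimension `2`. -/
theorem generalized_cnot_not_a_qca (N : ℕ) [NeZero N] (hN : 2 ≤ N) :
    cnotAll N * cnotAll N = 1 ∧
    cnotAll N ∈ Matrix.unitaryGroup (Conf (fun _ : ZMod N => Fin 2)) ℂ ∧
    star (cnotAll N) * embedAt (fun _ : ZMod N => Fin 2) 0 pauliX * cnotAll N = allX N ∧
    (5 ≤ N → ∀ n : ZMod N,
      ¬ Localized (fun _ : ZMod N => Fin 2)
        (star (cnotAll N) * embedAt (fun _ : ZMod N => Fin 2) 0 pauliX * cnotAll N)
        (({n}ᶜ : Set (ZMod N)))) ∧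
    (5 ≤ N → ¬ ∀ (n : ZMod N) (A : Ops (fun _ : ZMod N => Fin 2)),
      Localized (fun _ : ZMod N => Fin 2) A ({n} : Set (ZMod N)) →
      Localized (fun _ : ZMod N => Fin 2) (star (cnotAll N) * A * cnotAll N)
        ({n - 1, n, n + 1} : Set (ZMod N))) ∧
    ∃ w : ZMod N → Fin 2 → Fin 2 → Fin 2 → Fin 2 → ℂ,
      ∀ x y : Conf (fun _ : ZMod N => Fin 2),
        cnotAll N x y = ∑ α : ZMod N → Fin 2, ∏ n : ZMod N, w n (x n) (y n) (α n) (α (n + 1)) :=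
  generalized_cnot_not_a_qca_general N

end QCA
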